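/- arXiv:cs/0305039 — 8 statements merged into one kernel-verified Lean document; each statement's English description precedes it below -/
import Mathlib

section
/- Let z, f, g, h be words with f and g nonempty such that zf = gzh, and let a be a letter. Let az' be the longest unbordered prefix of az (so z' is a prefix of z). If az does not occur as a factor of zf, then the word agz' is unbordered. -/
open List

variable {A : Type*}

/-- `u` is a border of `w`: `u` is nonempty, a prefix of `w`, and a suffix of `w`
(in particular every nonempty word is a border of itself). -/
def IsBorder (u w : List A) : Prop :=
  u ≠ [] ∧ u <+: w ∧ u <:+ w

/-- `w` is bordered if it has a border strictly shorter than itself. -/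
def Bordered (w : List A) : Prop :=
  ∃ u, IsBorder u w ∧ u.length < w.length

/-- `w` is unbordered if it is not bordered. -/
def Unbordered (w : List A) : Prop := ¬ Bordered w

/-- The (minimum) period `∂(w)` of a word `w`: the least positive `p ≤ |w|` such that
the letter at position `i` equals the letter at position `i + p` whenever both exist. -/
noncomputable def period (w : List A) : ℕ :=
  sInf {p | 0 < p ∧ p ≤ w.length ∧ ∀ i, i + p < w.length → w[i]? = w[i + p]?}

/-- `μ(w)`: the maximum length of an unbordered factor of `w`. -/
noncomputable def mu (w : List A) : ℕ :=
  sSup {n | ∃ v : List A, v.length = n ∧ v <:+: w ∧ Unbordered v}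

/-- `a :: z'` is the longest unbordered prefix of `a :: z`:
`z'` is a prefix of `z`, `a :: z'` is unbordered, and any prefix `z''` of `z`
with `a :: z''` unbordered satisfies `|z''| ≤ |z'|`. -/
def LongestUnborderedPrefix (a : A) (z' z : List A) : Prop :=
  z' <+: z ∧ Unbordered (a :: z') ∧
    ∀ z'' : List A, z'' <+: z → Unbordered (a :: z'') → z''.length ≤ z'.length

/-
Take a shortest proper border `a :: v` of `a :: g z'`; it is unbordered, `v` is a prefix of `g z'`,
and `a :: v` is a suffix of `g z'`. Since `zf = gzh`, both `z` and `v` are prefixes of `gz`.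
If `z` is a prefix of `v`, then `a :: z` occurs in `a :: v`, hence in `g z' ⊆ gz ⊆ zf`.
Otherwise `v` is a prefix of `z`, so `|v| ≤ |z'|` by maximality of `z'`: if `v = z'` then `g` ends
with `a` and `a :: z` is a suffix of `gz`; if `v` is shorter, `a :: v` is a border of `a :: z'`.
-/

theorem Bordered.exists_unbordered_border {w : List A} (hw : Bordered w) :
    ∃ u, IsBorder u w ∧ u.length < w.length ∧ Unbordered u := by
  classical
  have hex : ∃ n, ∃ u : List A, IsBorder u w ∧ u.length < w.length ∧ u.length = n := by
    obtain ⟨u, hu, hlt⟩ := hw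
    exact ⟨u.length, u, hu, hlt, rfl⟩
  obtain ⟨u, hu, hlt, hlen⟩ := Nat.find_spec hex
  refine ⟨u, hu, hlt, ?_⟩
  rintro ⟨v, ⟨hne, hpre, hsuf⟩, hvlt⟩
  exact Nat.find_min hex (hlen ▸ hvlt)
    ⟨v, ⟨hne, hpre.trans hu.2.1, hsuf.trans hu.2.2⟩, hvlt.trans hlt, rfl⟩

theorem exists_unbordered_of_bordered_cons {a : A} {l : List A} (hb : Bordered (a :: l)) :
    ∃ v, v <+: l ∧ a :: v <:+ l ∧ Unbordered (a :: v) := by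
  obtain ⟨u, ⟨hne, hpre, hsuf⟩, hlt, hunb⟩ := hb.exists_unbordered_border
  obtain ⟨b, v, rfl⟩ := exists_cons_of_ne_nil hne
  obtain ⟨rfl, hv⟩ := cons_prefix_cons.1 hpre
  refine ⟨v, hv, (suffix_cons_iff.1 hsuf).resolve_left ?_, hunb⟩
  intro hvl
  exact hlt.ne (congrArg length hvl)

theorem bordered_cons_of_prefix_of_suffix {a : A} {v l : List A} (hpre : v <+: l)
    (hsuf : a :: v <:+ l) : Bordered (a :: l) :=
  ⟨a :: v, ⟨cons_ne_nil a v, cons_prefix_cons.2 ⟨rfl, hpre⟩, hsuf.trans (suffix_cons a l)⟩,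
    Nat.lt_succ_of_le hsuf.length_le⟩

theorem cons_suffix_append_of_cons_suffix_append {a : A} {g l m : List A}
    (h : a :: l <:+ g ++ l) : a :: m <:+ g ++ m := by
  obtain ⟨x, hx⟩ := h
  have hg : x ++ [a] = g := append_cancel_right (by simpa using hx)
  exact ⟨x, by simp [← hg]⟩

theorem unbordered_of_not_infix_general (z f g h : List A) (a : A)
    (heq : z ++ f = g ++ z ++ h)
    (z' : List A) (hz' : LongestUnborderedPrefix a z' z)
    (hocc : ¬ (a :: z) <:+: (z ++ f)) :
    Unbordered (a :: (g ++ z')) := by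
  obtain ⟨hz'z, hunb, hmax⟩ := hz'
  have hgz : g ++ z <+: z ++ f := ⟨h, by rw [heq, append_assoc]⟩
  have hz : z <+: g ++ z := prefix_of_prefix_length_le (prefix_append z f) hgz (by simp)
  have hgz' : g ++ z' <+: g ++ z := (prefix_append_right_inj g).2 hz'z
  intro hb
  obtain ⟨v, hvpre, hvsuf, hvunb⟩ := exists_unbordered_of_bordered_cons hb
  rcases prefix_or_prefix_of_prefix hz (hvpre.trans hgz') with hzv | hvz
  · exact hocc <| (cons_prefix_cons.2 ⟨rfl, hzv⟩).isInfix.trans <|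
      hvsuf.isInfix.trans (hgz'.trans hgz).isInfix
  · have hvz' : v <+: z' := prefix_of_prefix_length_le hvz hz'z (hmax v hvz hvunb)
    rcases hvz'.length_le.lt_or_eq with hlt | hlen
    · exact hunb <| bordered_cons_of_prefix_of_suffix hvz' <|
        suffix_of_suffix_length_le hvsuf (suffix_append g z') hlt
    · rw [hvz'.eq_of_length hlen] at hvsuf
      exact hocc ((cons_suffix_append_of_cons_suffix_append hvsuf).isInfix.trans hgz.isInfix)

/-- Lemma: if `z ++ f = g ++ z ++ h` with `f, g` nonempty, `a :: z'` is the longest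
unbordered prefix of `a :: z`, and `a :: z` does not occur as a factor of `z ++ f`,
then `a :: (g ++ z')` is unbordered. -/
theorem unbordered_of_not_infix (z f g h : List A) (a : A)
    (hf : f ≠ []) (hg : g ≠ []) (heq : z ++ f = g ++ z ++ h)
    (z' : List A) (hz' : LongestUnborderedPrefix a z' z)
    (hocc : ¬ (a :: z) <:+: (z ++ f)) :
    Unbordered (a :: (g ++ z')) :=
  unbordered_of_not_infix_general z f g h a heq z' hz' hocc
end

section
/- Let w be an unbordered word, let u be a prefix of w with u ≠ w, and let v be a suffix of w with v ≠ w. Then the words uw and wv are unbordered. -/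
open List

variable {A : Type*}

/-- Reversal preserves unborderedness. -/
theorem Unbordered.reverse {w : List A} (hw : Unbordered w) : Unbordered w.reverse := by
  rintro ⟨b, ⟨hbne, hbpre, hbsuf⟩, hblt⟩
  apply hw
  refine ⟨b.reverse, ⟨by simpa using hbne, ?_, ?_⟩, by simpa using hblt⟩
  · simpa using List.reverse_prefix.mpr hbsuf
  · simpa using List.reverse_suffix.mpr hbpre

/-- Key lemma: appending an unbordered word after a proper prefix yields an
unbordered word. -/
theorem unbordered_prefix_append {w u : List A}
    (hw : Unbordered w) (hu : u <+: w) (hune : u ≠ w) :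
    Unbordered (u ++ w) := by
  rcases eq_or_ne u [] with rfl | hu0
  · simpa using hw
  have hul : u.length < w.length :=
    lt_of_le_of_ne hu.length_le (fun h => hune (hu.eq_of_length h))
  have hu0' : 0 < u.length := List.length_pos_iff.mpr hu0
  rintro ⟨b, ⟨hbne, hbpre, hbsuf⟩, hblt⟩
  rw [List.length_append] at hblt
  have hwsuf : w <:+ u ++ w := List.suffix_append u w
  rcases le_or_gt b.length u.length with hle | hlt
  · -- b is a prefix of u, hence of w; and a suffix of w
    have hbu : b <+: u :=
      List.prefix_of_prefix_length_le hbpre (List.prefix_append u w) hle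
    have hbw : b <:+ w :=
      List.suffix_of_suffix_length_le hbsuf hwsuf (hle.trans hul.le)
    exact hw ⟨b, ⟨hbne, hbu.trans hu, hbw⟩, lt_of_le_of_lt hle hul⟩
  · -- u is a proper prefix of b; b = u ++ c
    have hub : u <+: b :=
      List.prefix_of_prefix_length_le (List.prefix_append u w) hbpre hlt.le
    obtain ⟨c, rfl⟩ := hub
    have hcw : c <+: w := (List.prefix_append_right_inj u).mp hbpre
    have hclen : c.length < w.length := by
      have := hblt
      rw [List.length_append] at this
      omega
    have hcne : c ≠ [] := by
      rintro rfl
      simp at hlt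
    have hcsuf : c <:+ w := by
      refine List.suffix_of_suffix_length_le ((List.suffix_append u c).trans hbsuf)
        hwsuf hclen.le
    exact hw ⟨c, ⟨hcne, hcw, hcsuf⟩, hclen⟩

/-- Lemma: if `w` is unbordered, `u` a proper prefix of `w` and `v` a proper suffix
of `w`, then `u ++ w` and `w ++ v` are unbordered. -/
theorem unbordered_append_of_prefix_suffix (w u v : List A)
    (hw : Unbordered w) (hu : u <+: w) (hune : u ≠ w)
    (hv : v <:+ w) (hvne : v ≠ w) :
    Unbordered (u ++ w) ∧ Unbordered (w ++ v) := by
  constructor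
  · exact unbordered_prefix_append hw hu hune
  · have h1 : Unbordered (v.reverse ++ w.reverse) := by
      apply unbordered_prefix_append hw.reverse
      · exact List.reverse_prefix.mpr hv
      · intro h; exact hvne (by simpa using congrArg List.reverse h)
    have := h1.reverse
    simpa using this
end

section
/- For every word w with |w| ≥ 2 and every point p in w (1 ≤ p < |w|): ∂(w, p) ≤ ∂(w), and every repetition word at point p of minimal length ∂(w, p) is unbordered. -/
open List

variable {A : Type*}

/-- `u` is a repetition word at point `p` of `w`: `u` is nonempty, `w = x ++ y` with
`|x| = p`, and there are `x'`, `y'` with `u` a suffix of `x' ++ x` and a prefix of `y ++ y'`. -/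
def RepetitionWord (w : List A) (p : ℕ) (u : List A) : Prop :=
  u ≠ [] ∧ ∃ x y x' y' : List A,
    w = x ++ y ∧ x.length = p ∧ u <:+ (x' ++ x) ∧ u <+: (y ++ y')

/-- The local period `∂(w, p)` at point `p` of `w`: the minimum length of a
repetition word at point `p`. -/
noncomputable def localPeriod (w : List A) (p : ℕ) : ℕ :=
  sInf {n | ∃ u : List A, u.length = n ∧ RepetitionWord w p u}

/-- For every word `w` with `|w| ≥ 2` and point `p` in `w`: the local period at `p`
is at most the period of `w`, and every repetition word at `p` of minimal length
`∂(w, p)` is unbordered. -/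
theorem localPeriod_le_period_and_min_rep_unbordered (w : List A) (hw : 2 ≤ w.length)
    (p : ℕ) (hp1 : 1 ≤ p) (hp2 : p < w.length) :
    localPeriod w p ≤ period w ∧
      ∀ u : List A, RepetitionWord w p u → u.length = localPeriod w p → Unbordered u := by
  constructor
  · -- period w is in its defining set
    have hne : {q | 0 < q ∧ q ≤ w.length ∧ ∀ i, i + q < w.length → w[i]? = w[i + q]?}.Nonempty :=
      ⟨w.length, by omega, le_refl _, fun i h => absurd h (by omega)⟩
    have hmem : period w ∈ {q | 0 < q ∧ q ≤ w.length ∧ ∀ i, i + q < w.length → w[i]? = w[i + q]?} :=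
      Nat.sInf_mem hne
    obtain ⟨hq0, hqle, hqper⟩ := hmem
    set q := period w with hqdef
    -- the periodic extension z
    set z : List A := w ++ w.drop (w.length - q) with hzdef
    have hzlen : z.length = w.length + q := by
      simp [hzdef, List.length_drop]; omega
    have hz : ∀ i, i < w.length → z[i]? = z[i + q]? := by
      intro i hi
      have h1 : z[i]? = w[i]? := List.getElem?_append_left hi
      rw [h1]
      by_cases h2 : i + q < w.length
      · rw [List.getElem?_append_left h2]; exact hqper i h2
      · rw [List.getElem?_append_right (by omega)]
        rw [List.getElem?_drop]
        congr 1; omega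
    set u : List A := (z.drop p).take q with hudef
    have huj : ∀ j, u[j]? = if j < q then z[p + j]? else none := by
      intro j
      rw [hudef, List.getElem?_take]
      by_cases h : j < q <;> simp [h, List.getElem?_drop]
    have hulen : u.length = q := by
      simp [hudef, List.length_drop, hzlen]; omega
    have hune : u ≠ [] := by
      intro h; rw [h] at hulen; simp at hulen; omega
    -- witnesses
    have hxlen : (w.take p).length = p := by
      simp [List.length_take]; omega
    have hxz : z.take p = w.take p := List.take_append_of_le_length (by omega)
    have hyz : z.drop p = w.drop p ++ w.drop (w.length - q) :=
      List.drop_append_of_le_length (by omega)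
    have hpre : u <+: (w.drop p ++ w.drop (w.length - q)) := by
      rw [← hyz, hudef]; exact List.take_prefix _ _
    have hsuf : ∃ x' : List A, u <:+ (x' ++ w.take p) := by
      by_cases hqp : q ≤ p
      · refine ⟨[], ?_⟩
        rw [List.nil_append]
        have : u = (w.take p).drop (p - q) := by
          apply List.ext_getElem?
          intro j
          rw [huj, List.getElem?_drop, ← hxz, List.getElem?_take]
          by_cases h : j < q
          · have h' : p - q + j < p := by omega
            rw [if_pos h, if_pos h']
            have := hz (p - q + j) (by omega)
            rw [this]; congr 1; omega
          · rw [if_neg h, if_neg (by omega)]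
        rw [this]; exact List.drop_suffix _ _
      · refine ⟨u.take (q - p), ?_⟩
        have hx : w.take p = u.drop (q - p) := by
          apply List.ext_getElem?
          intro j
          rw [List.getElem?_drop, huj, ← hxz, List.getElem?_take]
          by_cases h : j < p
          · have h' : q - p + j < q := by omega
            rw [if_pos h, if_pos h']
            have := hz j (by omega)
            rw [this]; congr 1; omega
          · rw [if_neg h, if_neg (by omega : ¬ q - p + j < q)]
        rw [hx, List.take_append_drop]
    obtain ⟨x', hsuf⟩ := hsuf
    have hrep : RepetitionWord w p u :=
      ⟨hune, w.take p, w.drop p, x', w.drop (w.length - q),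
        (List.take_append_drop p w).symm, hxlen, hsuf, hpre⟩
    exact Nat.sInf_le ⟨u, hulen, hrep⟩
  · rintro u ⟨hune, x, y, x', y', hw', hx, husuf, hupre⟩ hulen ⟨b, ⟨hbne, hbpre, hbsuf⟩, hblt⟩
    have : localPeriod w p ≤ b.length :=
      Nat.sInf_le ⟨b, rfl, hbne, x, y, x', y', hw', hx,
        hbsuf.trans husuf, hbpre.trans hupre⟩
    omega
end

section
/- Let w = uv be an unbordered word with u, v nonempty such that |u| is a critical point of w. Then u and v do not overlap. -/
open List

variable {A : Type*}

/-- `u` overlaps `v` from the left: there is a word `s` with `|s| < |u| + |v|`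
such that `u` is a prefix of `s` and `v` is a suffix of `s`. -/
def OverlapsFromLeft (u v : List A) : Prop :=
  ∃ s : List A, s.length < u.length + v.length ∧ u <+: s ∧ v <:+ s

/-- `u` and `v` overlap: one is a factor of the other, or one overlaps the other
from the left. -/
def Overlaps (u v : List A) : Prop :=
  u <:+: v ∨ v <:+: u ∨ OverlapsFromLeft u v ∨ OverlapsFromLeft v u


set_option linter.unreachableTactic false
set_option linter.unusedTactic false

lemma period_eq_length_of_unbordered' {w : List A} (hw : w ≠ [])
    (hub : Unbordered w) : period w = w.length := by
  have hmem : w.length ∈ {p | 0 < p ∧ p ≤ w.length ∧ ∀ i, i + p < w.length → w[i]? = w[i + p]?} :=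
    ⟨List.length_pos_iff.mpr hw, le_refl _, fun i hi => absurd hi (by omega)⟩
  refine le_antisymm (Nat.sInf_le hmem) ?_
  by_contra hlt
  push_neg at hlt
  obtain ⟨hp0, hple, hper⟩ := Nat.sInf_mem (⟨_, hmem⟩ : Set.Nonempty _)
  rw [period] at hlt
  set p := sInf {p | 0 < p ∧ p ≤ w.length ∧ ∀ i, i + p < w.length → w[i]? = w[i + p]?} with hp
  apply hub
  have hdt : w.drop p = w.take (w.length - p) := by
    apply List.ext_getElem?
    intro i
    rcases lt_or_ge i (w.length - p) with h | h
    · rw [List.getElem?_drop, List.getElem?_take, if_pos h, Nat.add_comm]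
      exact (hper i (by omega)).symm
    · rw [List.getElem?_drop]
      rw [List.getElem?_eq_none (by first | omega | (simp [List.length_take]; omega)),
        List.getElem?_eq_none (by first | omega | (simp [List.length_take]; omega))]
  refine ⟨w.drop p, ⟨?_, ?_, List.drop_suffix _ _⟩, ?_⟩
  · simp only [ne_eq, List.drop_eq_nil_iff]
    omega
  · rw [hdt]; exact List.take_prefix _ _
  · simp; omega

/-- Lemma: if `w = u ++ v` is unbordered and `|u|` is a critical point of `w`,
then `u` and `v` do not overlap. -/
theorem no_overlap_of_critical (u v : List A) (hu : u ≠ []) (hv : v ≠ [])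
    (hub : Unbordered (u ++ v))
    (hcrit : localPeriod (u ++ v) u.length = period (u ++ v)) :
    ¬ Overlaps u v := by
  intro hov
  have hupos : 0 < u.length := List.length_pos_iff.mpr hu
  have hvpos : 0 < v.length := List.length_pos_iff.mpr hv
  have hw : (u : List A) ++ v ≠ [] := by simp [hu]
  have hper : period (u ++ v) = (u ++ v).length :=
    period_eq_length_of_unbordered' hw hub
  obtain ⟨t, htne, htlen, hx', hy'⟩ : ∃ t : List A, t ≠ [] ∧
      t.length < u.length + v.length ∧ (∃ x', t <:+ x' ++ u) ∧ (∃ y', t <+: v ++ y') := by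
    rcases hov with ⟨s, r, h⟩ | ⟨s, r, h⟩ | ⟨s, hs, ⟨a, ha⟩, ⟨b, hb⟩⟩ | ⟨s, hs, ⟨a, ha⟩, ⟨b, hb⟩⟩
    · -- u infix of v : s ++ u ++ r = v
      refine ⟨s ++ u, by simp [hu], ?_, ⟨s, suffix_refl _⟩, ⟨[], ?_⟩⟩
      · have := congrArg List.length h
        simp at this
        simp
        omega
      · rw [List.append_nil]
        exact ⟨r, by rw [← h]⟩
    · -- v infix of u : s ++ v ++ r = u
      refine ⟨v ++ r, by simp [hv], ?_, ⟨[], ?_⟩, ⟨r, prefix_refl _⟩⟩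
      · have := congrArg List.length h
        simp at this
        simp
        omega
      · rw [List.nil_append]
        exact ⟨s, by rw [← h]; simp⟩
    · -- OverlapsFromLeft u v : u ++ a = s = b ++ v
      have key : b ++ v = u ++ a := hb.trans ha.symm
      have hlen : b.length < u.length := by
        have h1 := congrArg List.length key
        simp at h1
        have h2 := congrArg List.length ha
        simp at h2
        omega
      have hbu : b <+: u := by
        have h2 : b = (u ++ a).take b.length := List.prefix_iff_eq_take.mp ⟨v, key⟩
        rw [List.take_append, Nat.sub_eq_zero_of_le (le_of_lt hlen),
          List.take_zero, List.append_nil] at h2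
        exact h2 ▸ List.take_prefix _ _
      obtain ⟨c, hc⟩ := hbu
      have hclen : c.length = u.length - b.length := by
        have := congrArg List.length hc
        simp at this
        omega
      have hcv : v = c ++ a := by
        have h3 : b ++ v = b ++ (c ++ a) := by rw [key, ← hc, List.append_assoc]
        exact List.append_cancel_left h3
      refine ⟨c, List.length_pos_iff.mp (by omega), by omega,
        ⟨[], by rw [List.nil_append]; exact ⟨b, hc⟩⟩,
        ⟨[], by rw [List.append_nil, hcv]; exact List.prefix_append c a⟩⟩
    · -- OverlapsFromLeft v u : v ++ a = s = b ++ u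
      refine ⟨s, ?_, by omega, ⟨b, by rw [hb]⟩, ⟨a, by rw [ha]⟩⟩
      rw [← hb]; simp [hu]
  have hrep : RepetitionWord (u ++ v) u.length t :=
    ⟨htne, u, v, hx'.choose, hy'.choose, rfl, rfl, hx'.choose_spec, hy'.choose_spec⟩
  have hle : localPeriod (u ++ v) u.length ≤ t.length := Nat.sInf_le ⟨t, rfl, hrep⟩
  rw [hcrit, hper] at hle
  simp at hle
  omega
end

section
/- Let u₀u₁ be an unbordered word with u₀, u₁ nonempty such that |u₀| is a critical point of u₀u₁. Then for every word x and each i ∈ {0,1}, the word u_i x u_{(i+1) mod 2} is either unbordered, or its shortest border g (i.e. its minimum-length border) satisfies |g| ≥ |u₀| + |u₁|. -/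
open List

variable {A : Type*}

/-- `g` is the shortest (proper) border of `w`. -/
def ShortestBorder (g w : List A) : Prop :=
  IsBorder g w ∧ g.length < w.length ∧
    ∀ g' : List A, IsBorder g' w → g'.length < w.length → g.length ≤ g'.length

theorem my_pre_split {g a b : List A} (h : g <+: a ++ b) : g <+: a ∨ a <+: g := by
  rcases le_total g.length a.length with hl | hl
  · exact Or.inl (List.prefix_of_prefix_length_le h (a.prefix_append b) hl)
  · exact Or.inr (List.prefix_of_prefix_length_le (a.prefix_append b) h hl)

theorem my_suf_split {g a b : List A} (h : g <:+ a ++ b) : g <:+ b ∨ b <:+ g := by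
  rcases le_total g.length b.length with hl | hl
  · left
    rw [← List.reverse_prefix] at *
    rw [List.reverse_append] at h
    exact List.prefix_of_prefix_length_le h (List.prefix_append _ _) (by simpa)
  · right
    rw [← List.reverse_prefix] at *
    rw [List.reverse_append] at h
    exact List.prefix_of_prefix_length_le (List.prefix_append _ _) h (by simpa)

theorem my_rep_of {u₀ u₁ g : List A} (hg : g ≠ [])
    (hs : g <:+ u₀ ∨ u₀ <:+ g) (hp : g <+: u₁ ∨ u₁ <+: g) :
    RepetitionWord (u₀ ++ u₁) u₀.length g := by
  obtain ⟨x', hx'⟩ : ∃ x', g <:+ x' ++ u₀ := by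
    rcases hs with hs | hs
    · exact ⟨[], by simpa using hs⟩
    · obtain ⟨d, hd⟩ := hs
      exact ⟨d, by rw [hd]⟩
  obtain ⟨y', hy'⟩ : ∃ y', g <+: u₁ ++ y' := by
    rcases hp with hp | hp
    · exact ⟨[], by simpa using hp⟩
    · obtain ⟨c, hc⟩ := hp
      exact ⟨c, by rw [hc]⟩
  exact ⟨hg, u₀, u₁, x', y', rfl, rfl, hx', hy'⟩

theorem my_period_of_unbordered (w : List A) (hw : w ≠ []) (hub : Unbordered w) :
    period w = w.length := by
  have hmem : w.length ∈ {p | 0 < p ∧ p ≤ w.length ∧ ∀ i, i + p < w.length → w[i]? = w[i + p]?} :=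
    ⟨List.length_pos_iff.mpr hw, le_rfl, fun i hi => absurd hi (by omega)⟩
  refine le_antisymm (Nat.sInf_le hmem) (le_csInf ⟨_, hmem⟩ ?_)
  rintro p ⟨hp0, hple, hper⟩
  by_contra hlt
  push_neg at hlt
  apply hub
  refine ⟨w.drop p, ⟨?_, ?_, List.drop_suffix p w⟩, by simp; omega⟩
  · simp [← List.length_pos_iff]; omega
  · have : w.drop p = w.take (w.length - p) := by
      apply List.ext_getElem?
      intro n
      rw [List.getElem?_drop, List.getElem?_take]
      split
      · rename_i hn
        rw [Nat.add_comm]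
        exact (hper n (by omega)).symm
      · rename_i hn
        rw [List.getElem?_eq_none]
        omega
    rw [this]
    exact List.take_prefix _ _

theorem my_rep_ge {u₀ u₁ : List A} (h₀ : u₀ ≠ []) (hub : Unbordered (u₀ ++ u₁))
    (hcrit : localPeriod (u₀ ++ u₁) u₀.length = period (u₀ ++ u₁)) :
    ∀ g : List A, RepetitionWord (u₀ ++ u₁) u₀.length g →
      u₀.length + u₁.length ≤ g.length := by
  intro g hg
  have hper : period (u₀ ++ u₁) = u₀.length + u₁.length := by
    rw [my_period_of_unbordered _ (by simp [h₀]) hub, List.length_append]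
  have := Nat.sInf_le (s := {n | ∃ u : List A, u.length = n ∧ RepetitionWord (u₀ ++ u₁) u₀.length u})
    ⟨g, rfl, hg⟩
  calc u₀.length + u₁.length = localPeriod (u₀ ++ u₁) u₀.length := by rw [hcrit, hper]
    _ ≤ g.length := this

theorem my_exists_shortest (z : List A) (h : Bordered z) : ∃ g, ShortestBorder g z := by
  have hne : {n | ∃ g : List A, IsBorder g z ∧ g.length < z.length ∧ g.length = n}.Nonempty := by
    obtain ⟨u, hu, hl⟩ := h
    exact ⟨u.length, u, hu, hl, rfl⟩
  obtain ⟨g, hg, hl, hlen⟩ := Nat.sInf_mem hne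
  refine ⟨g, hg, hl, fun g' h' hl' => ?_⟩
  rw [hlen]
  exact Nat.sInf_le ⟨g', h', hl', rfl⟩

/-- Lemma: if `u₀ ++ u₁` is unbordered and `|u₀|` is a critical point of it, then for
every word `x`, each of `u₀ ++ x ++ u₁` and `u₁ ++ x ++ u₀` is either unbordered or
has a shortest border of length at least `|u₀| + |u₁|`. -/
theorem border_long_of_critical (u₀ u₁ : List A) (h₀ : u₀ ≠ []) (h₁ : u₁ ≠ [])
    (hub : Unbordered (u₀ ++ u₁))
    (hcrit : localPeriod (u₀ ++ u₁) u₀.length = period (u₀ ++ u₁)) :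
    ∀ x : List A,
      (Unbordered (u₀ ++ x ++ u₁) ∨
        ∃ g : List A, ShortestBorder g (u₀ ++ x ++ u₁) ∧
          u₀.length + u₁.length ≤ g.length) ∧
      (Unbordered (u₁ ++ x ++ u₀) ∨
        ∃ g : List A, ShortestBorder g (u₁ ++ x ++ u₀) ∧
          u₀.length + u₁.length ≤ g.length) := by
  intro x
  have T := my_rep_ge h₀ hub hcrit
  have hlen0 : 0 < u₀.length := List.length_pos_iff.mpr h₀
  have hlen1 : 0 < u₁.length := List.length_pos_iff.mpr h₁
  -- key for u₀ x u₁
  have key0 : ∀ g : List A, IsBorder g (u₀ ++ x ++ u₁) → u₀.length + u₁.length ≤ g.length := by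
    rintro g ⟨hg, hpre, hsuf⟩
    by_contra hshort
    push_neg at hshort
    have hp : g <+: u₀ ∨ u₀ <+: g := by
      rw [List.append_assoc] at hpre
      exact my_pre_split hpre
    have hs : g <:+ u₁ ∨ u₁ <:+ g := my_suf_split hsuf
    rcases hp with hp | hp <;> rcases hs with hs | hs
    · -- g prefix of u₀, suffix of u₁ : border of u₀ ++ u₁
      apply hub
      refine ⟨g, ⟨hg, hp.trans (u₀.prefix_append u₁), hs.trans (List.suffix_append u₀ u₁)⟩, ?_⟩
      have := hs.length_le
      simp
      omega
    · -- g prefix of u₀, u₁ suffix of g : u = u₁ ++ c where u₀ = g ++ c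
      obtain ⟨c, hc⟩ := hp
      obtain ⟨d, hd⟩ := hs
      have hrep : RepetitionWord (u₀ ++ u₁) u₀.length (u₁ ++ c) := by
        apply my_rep_of (by simp [h₁])
        · left
          refine ⟨d, ?_⟩
          rw [← List.append_assoc, hd, hc]
        · right
          exact List.prefix_append _ _
      have := T _ hrep
      have h1 : u₀.length = g.length + c.length := by rw [← hc]; simp
      have h2 : g.length = d.length + u₁.length := by rw [← hd]; simp
      simp [List.length_append] at this
      have hg' : 0 < g.length := List.length_pos_iff.mpr hg
      omega
    · -- u₀ prefix of g, g suffix of u₁ : u = a ++ u₀ where u₁ = a ++ g, g = u₀ ++ b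
      obtain ⟨b, hb⟩ := hp
      obtain ⟨a, ha⟩ := hs
      have hrep : RepetitionWord (u₀ ++ u₁) u₀.length (a ++ u₀) := by
        apply my_rep_of (by simp [h₀])
        · right
          exact List.suffix_append _ _
        · left
          refine ⟨b, ?_⟩
          rw [List.append_assoc, hb, ha]
      have := T _ hrep
      have h1 : u₁.length = a.length + g.length := by rw [← ha]; simp
      have h2 : g.length = u₀.length + b.length := by rw [← hb]; simp
      simp [List.length_append] at this
      have hg' : 0 < g.length := List.length_pos_iff.mpr hg
      omega
    · -- u₀ prefix of g, u₁ suffix of g : overlap t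
      obtain ⟨s, hsg⟩ := hp
      obtain ⟨s', hs'⟩ := hs
      -- g = u₀ ++ s = s' ++ u₁ ; |s'| < |u₀|
      have hls' : s'.length < u₀.length := by
        have h1 : g.length = u₀.length + s.length := by rw [← hsg]; simp
        have h2 : g.length = s'.length + u₁.length := by rw [← hs']; simp
        omega
      set t := u₀.drop s'.length with ht
      have htpre : t ++ s = u₁ := by
        have : (u₀ ++ s).drop s'.length = (s' ++ u₁).drop s'.length := by rw [hsg, hs']
        rw [List.drop_append_of_le_length (le_of_lt hls')] at this
        simpa using this
      have htne : t ≠ [] := by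
        rw [← List.length_pos_iff, ht, List.length_drop]
        omega
      have hrep : RepetitionWord (u₀ ++ u₁) u₀.length t := by
        apply my_rep_of htne
        · exact Or.inl (List.drop_suffix _ _)
        · exact Or.inl ⟨s, htpre⟩
      have := T _ hrep
      have : u₀.length + u₁.length ≤ t.length := this
      have hlt : t.length ≤ u₀.length := by rw [ht, List.length_drop]; omega
      omega
  -- key for u₁ x u₀
  have key1 : ∀ g : List A, IsBorder g (u₁ ++ x ++ u₀) → u₀.length + u₁.length ≤ g.length := by
    rintro g ⟨hg, hpre, hsuf⟩
    have hp : g <+: u₁ ∨ u₁ <+: g := by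
      rw [List.append_assoc] at hpre
      exact my_pre_split hpre
    have hs : g <:+ u₀ ∨ u₀ <:+ g := my_suf_split hsuf
    exact T g (my_rep_of hg hs hp)
  constructor
  · by_cases hb : Bordered (u₀ ++ x ++ u₁)
    · obtain ⟨g, hg⟩ := my_exists_shortest _ hb
      exact Or.inr ⟨g, hg, key0 g hg.1⟩
    · exact Or.inl hb
  · by_cases hb : Bordered (u₁ ++ x ++ u₀)
    · obtain ⟨g, hg⟩ := my_exists_shortest _ hb
      exact Or.inr ⟨g, hg, key1 g hg.1⟩
    · exact Or.inl hb
end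

section
/- Let wu be a minimal Duval extension of w, i.e. wu is a nontrivial Duval extension of w and |u| ≤ |u'| for every nonempty word u' such that wu' is a nontrivial Duval extension of w. Then u occurs as a factor of w. -/
open List

variable {A : Type*}

/-!
Minimality forces `u = x a` where `x c` is a prefix of `w` and `c ≠ a`: otherwise a shorter
nontrivial Duval extension of `w` would be available. Now let `y` be a suffix of `x` such that
`y a` is unbordered (initially `y = []`). The suffix `z = y c ⋯ u` of `wu` is longer than `w`,
hence bordered, and its shortest border `b` is unbordered. Since `z` starts with `y c` and ends
with `y a`, while `y a` is unbordered and `c ≠ a`, the border `b` is longer than `y a`.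
If `|b| ≥ |u|`, then `b`, being unbordered, fits into the first half of `z`, which lies in `w`,
and `b` ends with `u`. Otherwise `b = y' a` for a longer suffix `y'` of `x`, and we repeat.
-/

theorem IsBorder.trans {b c z : List A} (hbc : IsBorder b c) (hcz : IsBorder c z) :
    IsBorder b z :=
  ⟨hbc.1, hbc.2.1.trans hcz.2.1, hbc.2.2.trans hcz.2.2⟩

theorem unbordered_singleton (a : A) : Unbordered [a] := by
  rintro ⟨b, ⟨hb, -, -⟩, hlt⟩
  exact hb (length_eq_zero_iff.mp (by simpa using hlt))

theorem Bordered.exists_unbordered_isBorder {z : List A} (hz : Bordered z) :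
    ∃ b, IsBorder b z ∧ b.length < z.length ∧ Unbordered b := by
  obtain ⟨b, hbz, hlt⟩ := hz
  by_cases hb : Bordered b
  · obtain ⟨c, hcb, hlt', hc⟩ := hb.exists_unbordered_isBorder
    exact ⟨c, hcb.trans hbz, hlt'.trans hlt, hc⟩
  · exact ⟨b, hbz, hlt, hb⟩
termination_by z.length

theorem IsBorder.bordered_of_lt_two_mul {b z : List A} (hb : IsBorder b z)
    (hlt : b.length < z.length) (hz : z.length < 2 * b.length) : Bordered b := by
  set i := b.length
  set L := z.length
  have htake : b = z.take i := prefix_iff_eq_take.mp hb.2.1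
  have hdrop : b = z.drop (L - i) := suffix_iff_eq_drop.mp hb.2.2
  have hoverlap : b.drop (L - i) = b.take (2 * i - L) := by
    conv_lhs => rw [htake]
    rw [drop_take, ← hdrop]
    congr 1
    omega
  refine ⟨b.drop (L - i), ⟨?_, hoverlap ▸ take_prefix _ b, drop_suffix _ b⟩, ?_⟩
  · simp only [ne_eq, drop_eq_nil_iff, not_le]
    omega
  · simp only [length_drop]
    omega

theorem infix_of_unbordered_isBorder {b p u : List A} (hb : IsBorder b (p ++ u))
    (hlt : b.length < (p ++ u).length) (hub : Unbordered b) (hu : u.length ≤ b.length) :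
    u <:+: p := by
  have hhalf : 2 * b.length ≤ (p ++ u).length := by
    by_contra! h
    exact hub (hb.bordered_of_lt_two_mul hlt h)
  rw [length_append] at hhalf
  have hbp : b <+: p := prefix_of_prefix_length_le hb.2.1 (prefix_append p u) (by omega)
  exact (suffix_of_suffix_length_le (suffix_append p u) hb.2.2 hu).isInfix.trans hbp.isInfix

theorem le_mu {v y : List A} (hv : v <:+: y) (hub : Unbordered v) : v.length ≤ mu y :=
  le_csSup ⟨y.length, by rintro n ⟨v, rfl, hv, -⟩; exact hv.length_le⟩ ⟨v, rfl, hv, hub⟩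

theorem bordered_of_mu_lt_length {v y : List A} (hv : v <:+: y) (hlt : mu y < v.length) :
    Bordered v := by
  by_contra hub
  exact absurd (le_mu hv hub) (not_le.mpr hlt)

theorem mu_eq_of_infix {w x y : List A} (hw : Unbordered w) (hwy : w <:+: y) (hyx : y <:+: x)
    (hx : mu x = w.length) : mu y = w.length := by
  refine le_antisymm (csSup_le ⟨_, w, rfl, hwy, hw⟩ ?_) (le_mu hwy hw)
  rintro n ⟨v, rfl, hv, hub⟩
  exact hx ▸ le_mu (hv.trans hyx) hub

theorem drop_prefix_iff {l : List A} {p : ℕ} :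
    l.drop p <+: l ↔ ∀ i, i + p < l.length → l[i]? = l[i + p]? := by
  rw [prefix_iff_getElem?]
  constructor
  · intro h i hi
    simp [h i (by simp; omega), Nat.add_comm]
  · intro h i hi
    simp [h i (by simp at hi; omega), Nat.add_comm]

theorem Bordered.of_drop_prefix {w : List A} {p : ℕ} (hp : 0 < p) (hpw : p < w.length)
    (h : w.drop p <+: w) : Bordered w :=
  ⟨w.drop p, ⟨by simp; omega, h, drop_suffix p w⟩, by simp; omega⟩

theorem period_append_eq_length_iff {w : List A} (hw : Unbordered w) (hne : w ≠ [])
    (v : List A) : period (w ++ v) = w.length ↔ v <+: w ++ v := by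
  have hdrop : (w ++ v).drop w.length = v := drop_left
  have hmem : (w ++ v).length ∈ {p | 0 < p ∧ p ≤ (w ++ v).length ∧
      ∀ i, i + p < (w ++ v).length → (w ++ v)[i]? = (w ++ v)[i + p]?} :=
    ⟨by simp [length_pos_iff, hne], le_rfl, fun i hi => by omega⟩
  rw [period]
  constructor
  · intro h
    have := Nat.sInf_mem ⟨_, hmem⟩
    rw [h] at this
    have hper := drop_prefix_iff.2 this.2.2
    rwa [hdrop] at hper
  · intro h
    refine le_antisymm
      (Nat.sInf_le ⟨length_pos_iff.2 hne, by simp, drop_prefix_iff.1 (by rwa [hdrop])⟩)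
      (le_csInf ⟨_, hmem⟩ ?_)
    rintro p ⟨hp, -, hper⟩
    by_contra! hlt
    refine hw (Bordered.of_drop_prefix hp hlt (drop_prefix_iff.2 fun i hi => ?_))
    simpa [getElem?_append_left, hi, show i < w.length by omega] using hper i (by simp; omega)

theorem IsBorder.length_lt_of_mismatch {b y z : List A} {a c : A} (hb : IsBorder b z)
    (hy : Unbordered (y ++ [a])) (hca : c ≠ a) (hpre : y ++ [c] <+: z) (hsuf : y ++ [a] <:+ z) :
    y.length + 1 < b.length := by
  by_contra! h
  have hbc : b <+: y ++ [c] := prefix_of_prefix_length_le hb.2.1 hpre (by simpa using h)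
  have hba : b <:+ y ++ [a] := suffix_of_suffix_length_le hb.2.2 hsuf (by simpa using h)
  rcases prefix_concat_iff.mp hbc with rfl | hby
  · exact hca (by simpa using hba.eq_of_length (by simp))
  · refine hy ⟨b, ⟨hb.1, hby.trans (prefix_append y [a]), hba⟩, ?_⟩
    simpa using hby.length_le

theorem concat_infix_of_forall_bordered {x y t : List A} {a c : A} (hca : c ≠ a)
    (hbord : ∀ z, z <:+ x ++ c :: t ++ (x ++ [a]) →
      (x ++ c :: t).length < z.length → Bordered z)
    (hy : y <:+ x) (hya : Unbordered (y ++ [a])) : x ++ [a] <:+: x ++ c :: t := by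
  obtain ⟨p, hp⟩ := hy
  have hz : y ++ c :: t ++ (x ++ [a]) <:+ x ++ c :: t ++ (x ++ [a]) := ⟨p, by simp [← hp]⟩
  obtain ⟨b, hbz, hlt, hb⟩ := (hbord _ hz (by simp; omega)).exists_unbordered_isBorder
  have hgt : y.length + 1 < b.length := hbz.length_lt_of_mismatch hya hca (by simp)
    ((suffix_append_self_iff.2 ⟨p, hp⟩).trans (suffix_append _ _))
  by_cases hlen : (x ++ [a]).length ≤ b.length
  · exact (infix_of_unbordered_isBorder hbz hlt hb hlen).trans ⟨p, [], by simp [← hp]⟩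
  · obtain ⟨y', rfl, hy'⟩ := (suffix_concat_iff.mp
      (suffix_of_suffix_length_le hbz.2.2 (suffix_append _ _) (by omega))).resolve_left hbz.1
    exact concat_infix_of_forall_bordered hca hbord hy' hb
termination_by x.length - y.length
decreasing_by
  have := hy'.length_le
  simp only [length_append, length_singleton] at hgt
  omega

theorem exists_mismatch_of_shorter_extensions_trivial {w u : List A} (hw : w ≠ [])
    (hu : u ≠ []) (hnt : ¬ u <+: w ++ u)
    (htriv : ∀ u', u' ≠ [] → u'.length < u.length → w ++ u' <:+: w ++ u →
      u' <+: w ++ u') :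
    ∃ x t a c, c ≠ a ∧ w = x ++ c :: t ∧ u = x ++ [a] := by
  obtain ⟨x, a, rfl⟩ : ∃ x a, u = x ++ [a] := ⟨_, _, (dropLast_append_getLast hu).symm⟩
  have hx : x <+: w ++ x := by
    rcases eq_or_ne x [] with rfl | hx
    · exact nil_prefix
    · exact htriv x hx (by simp) ((prefix_append_right_inj w).2 (prefix_append x [a])).isInfix
  have hxw : x.length < w.length := by
    by_contra! h
    obtain ⟨q, rfl⟩ := prefix_of_prefix_length_le (prefix_append w x) hx h
    have hw0 : 0 < w.length := length_pos_iff.2 hw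
    have hq := htriv (q ++ [a]) (by simp) (by simp; omega)
      (by simpa using (suffix_append w _).isInfix)
    exact hnt (by simpa using hq)
  obtain ⟨r, rfl⟩ := prefix_of_prefix_length_le hx (prefix_append w x) hxw.le
  obtain ⟨c, t, rfl⟩ := exists_cons_of_ne_nil (by rintro rfl; simp at hxw : r ≠ [])
  refine ⟨x, t, a, c, ?_, rfl, rfl⟩
  rintro rfl
  exact hnt (((prefix_append_right_inj x).2 (by simp : [c] <+: c :: t)).trans (prefix_append _ _))

theorem minimal_duval_extension_infix_general (w u : List A)
    (hw : Unbordered w) (hu : u ≠ [])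
    (hduval : mu (w ++ u) = w.length)
    (hnontrivial : period (w ++ u) ≠ w.length)
    (hmin : ∀ u' : List A, u' ≠ [] → mu (w ++ u') = w.length →
      period (w ++ u') ≠ w.length → u.length ≤ u'.length) :
    u <:+: w := by
  have hw0 : w ≠ [] := by
    rintro rfl
    obtain ⟨a, u', rfl⟩ := exists_cons_of_ne_nil hu
    have := le_mu (IsPrefix.isInfix ⟨u', rfl⟩ : [a] <:+: a :: u') (unbordered_singleton a)
    simp_all
  obtain ⟨x, t, a, c, hca, rfl, rfl⟩ := exists_mismatch_of_shorter_extensions_trivial hw0 hu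
    (mt (period_append_eq_length_iff hw hw0 u).2 hnontrivial)
    fun u' hne hlt hinf => by
      by_contra h
      exact absurd (hmin u' hne (mu_eq_of_infix hw (prefix_append w u').isInfix hinf hduval)
        (mt (period_append_eq_length_iff hw hw0 u').1 h)) (not_le.2 hlt)
  exact concat_infix_of_forall_bordered hca
    (fun z hz hlt => bordered_of_mu_lt_length hz.isInfix (hduval ▸ hlt)) nil_suffix
    (unbordered_singleton a)

/-- Theorem: if `w ++ u` is a minimal nontrivial Duval extension of `w`
(no shorter nonempty `u'` gives a nontrivial Duval extension), then `u`
occurs as a factor of `w`. -/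
theorem minimal_duval_extension_infix [Nontrivial A] (w u : List A)
    (hw : Unbordered w) (hu : u ≠ [])
    (hduval : mu (w ++ u) = w.length)
    (hnontrivial : period (w ++ u) ≠ w.length)
    (hmin : ∀ u' : List A, u' ≠ [] → mu (w ++ u') = w.length →
      period (w ++ u') ≠ w.length → u.length ≤ u'.length) :
    u <:+: w :=
  minimal_duval_extension_infix_general w u hw hu hduval hnontrivial hmin
end

section
/- Let a and b be distinct letters and n, m ≥ 1. Let w = aⁿ b a^{n+m} b b and u = a^{n+m} b aⁿ. Then w is unbordered, wu is a nontrivial Duval extension of w (i.e. μ(wu) = |w| and ∂(wu) ≠ |w|), and |u| = |w| - 2. (Hence the bound |u| < |w| - 1 for nontrivial Duval extensions is tight.) -/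
open List

variable {A : Type*}

/-- If the first `d` letters of `v` agree with the last `d` letters (`0 < d < |v|`),
then `v` is bordered. -/
lemma bordered_of_getElem (v : List A) (d : ℕ) (hd : 0 < d) (hdv : d < v.length)
    (h : ∀ k, (hk : k < d) → v[k]'(by omega) = v[v.length - d + k]'(by omega)) :
    Bordered v := by
  refine ⟨v.take d, ⟨?_, List.take_prefix d v, ?_⟩, ?_⟩
  · intro hc
    have h0 : (v.take d).length = d := by rw [List.length_take]; omega
    rw [hc] at h0
    simp at h0
    omega
  · have heq : v.take d = v.drop (v.length - d) := by
      apply List.ext_getElem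
      · simp [List.length_take]; omega
      · intro i h1 h2
        rw [List.getElem_take, List.getElem_drop]
        have h1' : i < d := by rw [List.length_take] at h1; omega
        exact h i h1'
    rw [heq]
    exact List.drop_suffix _ _
  · rw [List.length_take]; omega

/-- The key arithmetic choose-a-border lemma. -/
lemma key_arith (n m : ℕ) (hn : 1 ≤ n) (hm : 1 ≤ m) (s t ℓ : ℕ)
    (hsum : s + ℓ + t = 4*n+2*m+4) (hl : 2*n+m+4 ≤ ℓ) :
    ∃ d, 0 < d ∧ d < ℓ ∧ ∀ k, k < d →
      ((s+k = n ∨ s+k = 2*n+m+1 ∨ s+k = 2*n+m+2 ∨ s+k = 3*n+2*m+3) ↔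
       (s+(ℓ-d+k) = n ∨ s+(ℓ-d+k) = 2*n+m+1 ∨ s+(ℓ-d+k) = 2*n+m+2 ∨
         s+(ℓ-d+k) = 3*n+2*m+3)) := by
  rcases lt_trichotomy s n with hs|hs|hs <;> rcases lt_trichotomy t n with ht|ht|ht
  · exact ⟨1, by omega, by omega, fun k hk => by omega⟩
  · exact ⟨n-s+1, by omega, by omega, fun k hk => by omega⟩
  · exact ⟨1, by omega, by omega, fun k hk => by omega⟩
  · exact ⟨n-t+1, by omega, by omega, fun k hk => by omega⟩
  · exact ⟨1, by omega, by omega, fun k hk => by omega⟩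
  · exact ⟨2*n+m+2-t, by omega, by omega, fun k hk => by omega⟩
  · exact ⟨1, by omega, by omega, fun k hk => by omega⟩
  · exact ⟨2*n+m+2-s, by omega, by omega, fun k hk => by omega⟩
  · exact ⟨1, by omega, by omega, fun k hk => by omega⟩

lemma zword_length (a b : A) (n m : ℕ) :
    ((replicate n a ++ [b] ++ replicate (n + m) a ++ [b, b]) ++
      (replicate (n + m) a ++ [b] ++ replicate n a)).length = 4*n+2*m+4 := by
  simp; omega

lemma zword_getElem (a b : A) (n m : ℕ) (i : ℕ) (h : i < 4*n+2*m+4) :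
    ((replicate n a ++ [b] ++ replicate (n + m) a ++ [b, b]) ++
      (replicate (n + m) a ++ [b] ++ replicate n a))[i]'(by rw [zword_length]; omega) =
    if i = n ∨ i = 2*n+m+1 ∨ i = 2*n+m+2 ∨ i = 3*n+2*m+3 then b else a := by
  simp only [List.getElem_append, List.length_append, List.length_replicate,
    List.length_cons, List.length_singleton, List.length_nil, List.getElem_replicate,
    List.getElem_singleton, List.getElem_cons]
  split_ifs <;> first | rfl | omega

/-- getElem? version. -/
lemma zword_getElem? (a b : A) (n m : ℕ) (i : ℕ) (h : i < 4*n+2*m+4) :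
    ((replicate n a ++ [b] ++ replicate (n + m) a ++ [b, b]) ++
      (replicate (n + m) a ++ [b] ++ replicate n a))[i]? =
    some (if i = n ∨ i = 2*n+m+1 ∨ i = 2*n+m+2 ∨ i = 3*n+2*m+3 then b else a) := by
  rw [List.getElem?_eq_getElem (by rw [zword_length]; omega)]
  rw [zword_getElem a b n m i h]

/-- Every factor of `w ++ u` longer than `|w| = 2n+m+3` is bordered. -/
lemma long_factor_bordered (a b : A) (n m : ℕ) (hn : 1 ≤ n) (hm : 1 ≤ m)
    (v : List A)
    (hv : v <:+: (replicate n a ++ [b] ++ replicate (n + m) a ++ [b, b]) ++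
      (replicate (n + m) a ++ [b] ++ replicate n a))
    (hlen : 2*n+m+3 < v.length) : Bordered v := by
  obtain ⟨p, q, hz⟩ := hv
  have hL := zword_length a b n m
  have hlens : p.length + v.length + q.length = 4*n+2*m+4 := by
    have := congrArg List.length hz
    simp at this
    omega
  set s := p.length with hs
  set ℓ := v.length with hℓ
  have hvget : ∀ k, (hk : k < ℓ) → v[k]'(by omega) =
      if s+k = n ∨ s+k = 2*n+m+1 ∨ s+k = 2*n+m+2 ∨ s+k = 3*n+2*m+3 then b else a := by
    intro k hk
    have h1 : ((replicate n a ++ [b] ++ replicate (n + m) a ++ [b, b]) ++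
        (replicate (n + m) a ++ [b] ++ replicate n a))[s + k]? = v[k]? := by
      rw [← hz, List.append_assoc, List.getElem?_append_right (by omega)]
      rw [show s + k - p.length = k by omega]
      rw [List.getElem?_append, if_pos (by omega)]
    rw [zword_getElem? a b n m (s+k) (by omega), List.getElem?_eq_getElem hk] at h1
    exact (Option.some_inj.mp h1).symm
  obtain ⟨d, hd0, hdl, hiff⟩ := key_arith n m hn hm s q.length ℓ hlens (by omega)
  apply bordered_of_getElem v d hd0 (by omega)
  intro k hk
  rw [hvget k (by omega), hvget (ℓ - d + k) (by omega)]
  exact if_congr (hiff k hk) rfl rfl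

/-- Example: for `w = aⁿ b a^(n+m) b b` and `u = a^(n+m) b aⁿ` with `a ≠ b` and
`n, m ≥ 1`, `w` is unbordered, `w ++ u` is a nontrivial Duval extension of `w`,
and `|u| = |w| - 2`; so the bound `|u| < |w| - 1` is tight. -/
theorem duval_extension_bound_tight (a b : A) (hab : a ≠ b) (n m : ℕ)
    (hn : 1 ≤ n) (hm : 1 ≤ m)
    (w u : List A)
    (hw : w = replicate n a ++ [b] ++ replicate (n + m) a ++ [b, b])
    (hu : u = replicate (n + m) a ++ [b] ++ replicate n a) :
    Unbordered w ∧ mu (w ++ u) = w.length ∧ period (w ++ u) ≠ w.length ∧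
      u.length = w.length - 2 := by
  subst hw
  subst hu
  set w : List A := replicate n a ++ [b] ++ replicate (n + m) a ++ [b, b] with hw
  set u : List A := replicate (n + m) a ++ [b] ++ replicate n a with hu
  have hwlen : w.length = 2*n+m+3 := by rw [hw]; simp; omega
  have hulen : u.length = 2*n+m+1 := by rw [hu]; simp; omega
  have hzlen : (w ++ u).length = 4*n+2*m+4 := zword_length a b n m
  have hzget? : ∀ i, i < 4*n+2*m+4 → (w ++ u)[i]? =
      some (if i = n ∨ i = 2*n+m+1 ∨ i = 2*n+m+2 ∨ i = 3*n+2*m+3 then b else a) :=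
    fun i hi => zword_getElem? a b n m i hi
  -- letters of w
  have hwget : ∀ i, (hi : i < 2*n+m+3) → w[i]'(by omega) =
      if i = n ∨ i = 2*n+m+1 ∨ i = 2*n+m+2 then b else a := by
    intro i hi
    have h1 : (w ++ u)[i]? = w[i]? := by
      rw [List.getElem?_append, if_pos (by omega)]
    rw [hzget? i (by omega), List.getElem?_eq_getElem (by omega)] at h1
    rw [(Option.some_inj.mp h1).symm]
    exact if_congr (by omega) rfl rfl
  -- w is unbordered
  have hwunb : Unbordered w := by
    rintro ⟨u', ⟨hne, hpre, hsuf⟩, hlt⟩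
    set k := u'.length with hk
    have hk1 : 1 ≤ k := List.length_pos_iff.mpr hne
    have hklt : k < 2*n+m+3 := by omega
    obtain ⟨tt, htt⟩ := hsuf
    have httlen : tt.length = 2*n+m+3 - k := by
      have := congrArg List.length htt
      simp only [List.length_append] at this
      omega
    have hsufget : ∀ i, (hi : i < k) → u'[i]'(by omega) = w[2*n+m+3 - k + i]'(by omega) := by
      intro i hi
      have h1 : w[2*n+m+3 - k + i]? = u'[i]? := by
        rw [← htt, List.getElem?_append_right (by omega)]
        congr 1
        omega
      rw [List.getElem?_eq_getElem (by omega), List.getElem?_eq_getElem (by omega)] at h1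
      exact (Option.some_inj.mp h1).symm
    have hlast : w[k-1]'(by omega) = w[2*n+m+2]'(by omega) := by
      rw [← hpre.getElem (show k-1 < k by omega), hsufget (k-1) (by omega)]
      congr 1
      omega
    rw [hwget (k-1) (by omega), hwget (2*n+m+2) (by omega)] at hlast
    have hkcase : k - 1 = n ∨ k - 1 = 2*n+m+1 := by
      by_contra hc
      push_neg at hc
      rw [if_neg (by omega), if_pos (by omega)] at hlast
      exact hab hlast
    have hk2 : 2 ≤ k := by omega
    have hsnd : w[k-2]'(by omega) = w[2*n+m+1]'(by omega) := by
      rw [← hpre.getElem (show k-2 < k by omega), hsufget (k-2) (by omega)]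
      congr 1
      omega
    rw [hwget (k-2) (by omega), hwget (2*n+m+1) (by omega)] at hsnd
    rw [if_neg (by omega), if_pos (by omega)] at hsnd
    exact hab hsnd
  refine ⟨hwunb, ?_, ?_, by omega⟩
  · -- mu (w ++ u) = w.length
    have hmem : w.length ∈ {nn | ∃ v : List A, v.length = nn ∧ v <:+: (w ++ u) ∧ Unbordered v} :=
      ⟨w, rfl, (List.prefix_append w u).isInfix, hwunb⟩
    have hub : ∀ x ∈ {nn | ∃ v : List A, v.length = nn ∧ v <:+: (w ++ u) ∧ Unbordered v},
        x ≤ w.length := by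
      rintro x ⟨v, hvl, hvinf, hvunb⟩
      by_contra hc
      push_neg at hc
      exact hvunb (long_factor_bordered a b n m hn hm v hvinf (by omega))
    exact le_antisymm (csSup_le ⟨w.length, hmem⟩ hub) (le_csSup ⟨w.length, hub⟩ hmem)
  · -- period (w ++ u) ≠ w.length
    intro hper
    have hTne : ((w ++ u).length) ∈
        {p | 0 < p ∧ p ≤ (w ++ u).length ∧
          ∀ i, i + p < (w ++ u).length → (w ++ u)[i]? = (w ++ u)[i + p]?} :=
      ⟨by omega, le_refl _, fun i hi => by omega⟩
    have hmem : period (w ++ u) ∈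
        {p | 0 < p ∧ p ≤ (w ++ u).length ∧
          ∀ i, i + p < (w ++ u).length → (w ++ u)[i]? = (w ++ u)[i + p]?} :=
      Nat.sInf_mem ⟨_, hTne⟩
    rw [hper] at hmem
    obtain ⟨-, -, hall⟩ := hmem
    have hbad := hall n (by omega)
    rw [hzget? n (by omega), hzget? (n + w.length) (by omega)] at hbad
    rw [Option.some_inj] at hbad
    rw [if_pos (by omega), if_neg (by omega)] at hbad
    exact hab hbad.symm
end

section
/- Let a and b be distinct letters, n ≥ 1, and let w = aⁿ b a^{n+1} b aⁿ b a^{n+2} b aⁿ b a^{n+1} b aⁿ. Then |w| = 7n + 10, μ(w) = 3n + 6, and ∂(w) = 4n + 7. (In particular, the precise length bound forcing ∂(w) = μ(w) is larger than (7/3)μ(w) - 4.) -/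
open List

variable {A : Type*}

/-- positions of the letter `b` in the Assous–Pouzet word. -/
def Pb (n i : ℕ) : Prop :=
  i = n ∨ i = 2*n+2 ∨ i = 3*n+3 ∨ i = 4*n+6 ∨ i = 5*n+7 ∨ i = 6*n+9

instance (n i : ℕ) : Decidable (Pb n i) := by unfold Pb; infer_instance

lemma ap_step (a b : A) (k : ℕ) (rest : List A) (i : ℕ) :
    (replicate k a ++ ([b] ++ rest))[i]? =
      if i < k then some a else if i = k then some b else rest[i - (k+1)]? := by
  rcases Nat.lt_trichotomy i k with h | h | h
  · rw [getElem?_append_left (by simpa using h), getElem?_replicate, if_pos h, if_pos h]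
  · subst h
    rw [getElem?_append_right (by simp), if_neg (by omega), if_pos rfl]
    simp
  · rw [getElem?_append_right (by simp; omega), if_neg (by omega), if_neg (by omega)]
    rw [getElem?_append_right (by simp; omega)]
    congr 1
    simp only [length_replicate, length_cons, length_nil, length_append]
    omega

set_option maxHeartbeats 4000000 in
lemma ap_wkey (a b : A) (n i : ℕ) (hi : i < 7*n+10) :
    (replicate n a ++ [b] ++ replicate (n + 1) a ++ [b] ++ replicate n a ++
      [b] ++ replicate (n + 2) a ++ [b] ++ replicate n a ++ [b] ++
      replicate (n + 1) a ++ [b] ++ replicate n a)[i]? =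
    some (if Pb n i then b else a) := by
  simp only [List.append_assoc]
  simp (config := { maxSteps := 10000000 }) only [ap_step, getElem?_replicate]
  rcases (show i < n ∨ i = n ∨ (n+1 ≤ i ∧ i ≤ 2*n+1) ∨ i = 2*n+2 ∨
      (2*n+3 ≤ i ∧ i ≤ 3*n+2) ∨ i = 3*n+3 ∨ (3*n+4 ≤ i ∧ i ≤ 4*n+5) ∨ i = 4*n+6 ∨
      (4*n+7 ≤ i ∧ i ≤ 5*n+6) ∨ i = 5*n+7 ∨ (5*n+8 ≤ i ∧ i ≤ 6*n+8) ∨ i = 6*n+9 ∨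
      (6*n+10 ≤ i ∧ i ≤ 7*n+9) from by omega) with h|h|h|h|h|h|h|h|h|h|h|h|h <;>
    (repeat rw [if_neg (by omega)]) <;> rw [if_pos (by omega)] <;>
    first
      | rw [if_pos (by simp only [Pb]; omega)]
      | rw [if_neg (by simp only [Pb]; omega)]

lemma bordered_of_q (v : List A) (q : ℕ) (hq : 0 < q) (hql : q < v.length)
    (h : ∀ i, i + q < v.length → v[i]? = v[i + q]?) : Bordered v := by
  refine ⟨v.drop q, ⟨?_, ?_, drop_suffix q v⟩, ?_⟩
  · simp only [ne_eq, drop_eq_nil_iff]; omega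
  · rw [prefix_iff_eq_take]
    apply ext_getElem?
    intro i
    rw [getElem?_drop, getElem?_take, length_drop]
    split
    · rw [h i (by omega), Nat.add_comm]
    · exact getElem?_eq_none (by omega)
  · rw [length_drop]; omega

lemma period_of_border {u v : List A} (hb : IsBorder u v) (hlt : u.length < v.length) :
    ∀ i, i + (v.length - u.length) < v.length → v[i]? = v[i + (v.length - u.length)]? := by
  obtain ⟨hne, hpre, hsuf⟩ := hb
  obtain ⟨t, ht⟩ := hpre
  obtain ⟨s, hs⟩ := hsuf
  intro i hi
  have hsl : s.length + u.length = v.length := by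
    have := congrArg List.length hs; simpa using this
  have h1 : v[i]? = u[i]? := by
    rw [← ht, getElem?_append_left]; omega
  have h2 : (s ++ u)[i + (v.length - u.length)]? = u[i]? := by
    rw [getElem?_append_right (by omega)]
    congr 1; omega
  rw [h1, ← h2, hs]

lemma unbordered_of (v : List A)
    (h : ∀ q, 0 < q → q < v.length → ∃ i, i + q < v.length ∧ v[i]? ≠ v[i+q]?) :
    Unbordered v := by
  rintro ⟨u, hb, hlt⟩
  have hul : 0 < u.length := by
    cases u with | nil => exact absurd rfl hb.1 | cons x xs => simp
  obtain ⟨i, hi, hne⟩ := h (v.length - u.length) (by omega) (by omega)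
  exact hne (period_of_border hb hlt i hi)

set_option maxHeartbeats 4000000 in
/-- Example (Assous–Pouzet): for `w = aⁿ b a^(n+1) b aⁿ b a^(n+2) b aⁿ b a^(n+1) b aⁿ`
with `a ≠ b` and `n ≥ 1`, one has `|w| = 7n + 10`, `μ(w) = 3n + 6`, and
`∂(w) = 4n + 7`. -/
theorem assous_pouzet_example (a b : A) (hab : a ≠ b) (n : ℕ) (hn : 1 ≤ n)
    (w : List A)
    (hw : w = replicate n a ++ [b] ++ replicate (n + 1) a ++ [b] ++ replicate n a ++
      [b] ++ replicate (n + 2) a ++ [b] ++ replicate n a ++ [b] ++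
      replicate (n + 1) a ++ [b] ++ replicate n a) :
    w.length = 7 * n + 10 ∧ mu w = 3 * n + 6 ∧ period w = 4 * n + 7 := by
  have hlen : w.length = 7 * n + 10 := by
    subst hw
    simp only [length_append, length_replicate, length_cons, length_nil]
    omega
  have hkey : ∀ i, i < 7*n+10 → w[i]? = some (if Pb n i then b else a) := by
    intro i hi
    rw [hw]; exact ap_wkey a b n i hi
  refine ⟨hlen, ?_, ?_⟩
  · -- mu
    have hT : mu w = sSup {k | ∃ v : List A, v.length = k ∧ v <:+: w ∧ Unbordered v} := rfl
    -- upper bound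
    have hub : ∀ k ∈ {k | ∃ v : List A, v.length = k ∧ v <:+: w ∧ Unbordered v},
        k ≤ 3*n+6 := by
      rintro k ⟨v, hvl, hvinf, hvunb⟩
      by_contra hk
      obtain ⟨x, y, hxy⟩ := hvinf
      set s := x.length with hsdef
      have hm : s + k + y.length = 7*n+10 := by
        have := congrArg List.length hxy
        simp only [length_append, hvl, hlen] at this
        omega
      have hvget : ∀ i, i < k → v[i]? = w[s+i]? := by
        intro i hi
        have hxvl : (x ++ v).length = s + k := by
          simp only [length_append, hvl, hsdef]
        rw [← hxy, getElem?_append_left (by rw [hxvl]; omega),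
          getElem?_append_right (by omega)]
        congr 1; omega
      have hex : ∃ q, 0 < q ∧ q < k ∧
          ∀ i, i + q < k → (Pb n (s+i) ↔ Pb n (s+(i+q))) := by
        by_cases h1 : Pb n (s + k - 1) <;> by_cases h2 : Pb n s <;>
          simp only [Pb] at h1 h2
        · -- both b
          exact ⟨k-1, by omega, by omega, fun i hi => by simp only [Pb]; omega⟩
        · -- end b, start a
          rcases (show (s + 1 ≤ n) ∨
              (n+1 ≤ s ∧ s ≤ 2*n+1 ∧ s + k = 6*n+10) ∨
              (n+2 ≤ s ∧ s ≤ 2*n+1 ∧ s + k = 5*n+8) ∨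
              (s = n+1 ∧ s + k = 5*n+8) ∨
              (2*n+3 ≤ s ∧ s ≤ 3*n+2 ∧ s + k = 6*n+10) from by omega) with
            h|h|h|h|h
          · exact ⟨s+k-1-n, by omega, by omega, fun i hi => by simp only [Pb]; omega⟩
          · exact ⟨4*n+7, by omega, by omega, fun i hi => by simp only [Pb]; omega⟩
          · exact ⟨3*n+5, by omega, by omega, fun i hi => by simp only [Pb]; omega⟩
          · exact ⟨2*n+4, by omega, by omega, fun i hi => by simp only [Pb]; omega⟩
          · exact ⟨3*n+6, by omega, by omega, fun i hi => by simp only [Pb]; omega⟩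
        · -- start b, end a
          rcases (show (s = n ∧ s + k ≤ 5*n+7) ∨
              (s = n ∧ 5*n+9 ≤ s+k ∧ s+k ≤ 6*n+9) ∨
              (s = n ∧ 6*n+11 ≤ s+k) ∨
              (s = 2*n+2 ∧ s+k ≤ 6*n+8) ∨
              (s = 2*n+2 ∧ s+k = 6*n+9) ∨
              (s = 2*n+2 ∧ 6*n+11 ≤ s+k) ∨
              (s = 3*n+3) from by omega) with
            h|h|h|h|h|h|h
          · exact ⟨3*n+6, by omega, by omega, fun i hi => by simp only [Pb]; omega⟩
          · exact ⟨4*n+7, by omega, by omega, fun i hi => by simp only [Pb]; omega⟩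
          · exact ⟨5*n+9, by omega, by omega, fun i hi => by simp only [Pb]; omega⟩
          · exact ⟨3*n+5, by omega, by omega, fun i hi => by simp only [Pb]; omega⟩
          · exact ⟨2*n+4, by omega, by omega, fun i hi => by simp only [Pb]; omega⟩
          · exact ⟨4*n+7, by omega, by omega, fun i hi => by simp only [Pb]; omega⟩
          · exact ⟨3*n+6, by omega, by omega, fun i hi => by simp only [Pb]; omega⟩
        · -- both a
          exact ⟨k-1, by omega, by omega, fun i hi => by simp only [Pb]; omega⟩
      obtain ⟨q, hq0, hqk, hqp⟩ := hex
      apply hvunb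
      apply bordered_of_q v q hq0 (by omega)
      intro i hi
      rw [hvl] at hi
      rw [hvget i (by omega), hvget (i+q) (by omega),
        hkey (s+i) (by omega), hkey (s+(i+q)) (by omega)]
      exact congrArg some (if_congr (hqp i hi) rfl rfl)
    -- witness
    have h36 : (3*n+6) ∈ {k | ∃ v : List A, v.length = k ∧ v <:+: w ∧ Unbordered v} := by
      refine ⟨(w.drop n).take (3*n+6), ?_, ?_, ?_⟩
      · rw [length_take, length_drop, hlen]; omega
      · exact ((take_prefix _ _).isInfix).trans ((drop_suffix _ _).isInfix)
      · have hvlen : ((w.drop n).take (3*n+6)).length = 3*n+6 := by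
          rw [length_take, length_drop, hlen]; omega
        have hvget : ∀ i, i < 3*n+6 → ((w.drop n).take (3*n+6))[i]? = w[n+i]? := by
          intro i hi
          rw [getElem?_take, if_pos hi, getElem?_drop]
        apply unbordered_of
        intro q hq0 hql
        rw [hvlen] at hql
        by_cases hq : q = n+2 ∨ q = 2*n+3
        · refine ⟨n+2, by rw [hvlen]; omega, ?_⟩
          rw [hvget (n+2) (by omega), hvget (n+2+q) (by omega),
            hkey (n+(n+2)) (by omega), hkey (n+(n+2+q)) (by omega),
            if_pos (by simp only [Pb]; omega), if_neg (by simp only [Pb]; omega)]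
          simp only [ne_eq, Option.some.injEq]
          exact Ne.symm hab
        · refine ⟨0, by rw [hvlen]; omega, ?_⟩
          rw [hvget 0 (by omega), hvget (0+q) (by omega),
            hkey (n+0) (by omega), hkey (n+(0+q)) (by omega),
            if_pos (by simp only [Pb]; omega), if_neg (by simp only [Pb]; omega)]
          simp only [ne_eq, Option.some.injEq]
          exact Ne.symm hab
    rw [hT]
    exact le_antisymm (csSup_le ⟨3*n+6, h36⟩ hub) (le_csSup ⟨3*n+6, hub⟩ h36)
  · -- period
    have hmem : (4*n+7) ∈ {p | 0 < p ∧ p ≤ w.length ∧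
        ∀ i, i + p < w.length → w[i]? = w[i + p]?} := by
      refine ⟨by omega, by rw [hlen]; omega, ?_⟩
      intro i hi
      rw [hlen] at hi
      rw [hkey i (by omega), hkey (i+(4*n+7)) (by omega)]
      exact congrArg some (if_congr (by simp only [Pb]; omega) rfl rfl)
    have hlb : ∀ p ∈ {p | 0 < p ∧ p ≤ w.length ∧
        ∀ i, i + p < w.length → w[i]? = w[i + p]?}, 4*n+7 ≤ p := by
      rintro p ⟨hp0, hple, hp⟩
      rw [hlen] at hple
      by_contra hlt
      have e1 := hp n (by rw [hlen]; omega)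
      have hbn : (if Pb n n then b else a) = b := if_pos (Or.inl rfl)
      rw [hkey n (by omega), hkey (n+p) (by omega), hbn] at e1
      have hp2 : Pb n (n+p) := by
        by_contra hP
        rw [if_neg hP] at e1
        exact hab (Option.some.inj e1).symm
      simp only [Pb] at hp2
      have e2 := hp (2*n+2) (by rw [hlen]; omega)
      have hb2 : (if Pb n (2*n+2) then b else a) = b := if_pos (Or.inr (Or.inl rfl))
      have ha2 : (if Pb n (2*n+2+p) then b else a) = a := if_neg (by simp only [Pb]; omega)
      rw [hkey (2*n+2) (by omega), hkey (2*n+2+p) (by omega), hb2, ha2] at e2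
      exact hab (Option.some.inj e2).symm
    exact le_antisymm (Nat.sInf_le hmem) (le_csInf ⟨_, hmem⟩ hlb)
end
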